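/- The formal Dirichlet series D(s) = -1 + (1 + 2·81^{-s}) ∏_{p ≡ 1 mod 6} (1 + 2 p^{-2s}) has n-th coefficient equal to 2^{ω(m)+δ} when n = 81^{δ} m² with δ ∈ {0,1} and m a squarefree product of primes ≡ 1 (mod 6) and (δ, m) ≠ (0, 1), equal to 0 for all other n ≥ 2, and equal to 0 at n = 1; here ω(m) is the number of prime divisors of m. -/
import Mathlib


open Classical

/-- The `n`-th coefficient of the formal Euler product `∏_{p ≡ 1 (6)} (1 + 2 p^{-2s})`,
obtained by expanding the product: it is `2^{|S|}` if `n = ∏_{p ∈ S} p²` for a (unique)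
finite set `S` of primes `≡ 1 (mod 6)`, and `0` otherwise. -/
noncomputable def prodCoef (n : ℕ) : ℤ :=
  if h : ∃ S : Finset ℕ, (∀ p ∈ S, Nat.Prime p ∧ p % 6 = 1) ∧ (∏ p ∈ S, p ^ 2) = n then
    2 ^ h.choose.card
  else 0

/-- The `n`-th coefficient of the formal Dirichlet series
`D(s) = -1 + (1 + 2·81^{-s}) ∏_{p ≡ 1 (6)} (1 + 2 p^{-2s})`. -/
noncomputable def seriesCoef (n : ℕ) : ℤ :=
  (if n = 1 then -1 else 0) + prodCoef n + (if 81 ∣ n then 2 * prodCoef (n / 81) else 0)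

lemma squarefree_prod_primes : ∀ {S : Finset ℕ}, (∀ p ∈ S, Nat.Prime p) →
    Squarefree (∏ p ∈ S, p) := by
  intro S
  induction S using Finset.induction_on with
  | empty => intro _; simpa using squarefree_one
  | @insert a S ha ih =>
    intro h
    rw [Finset.prod_insert ha]
    have hp := h _ (Finset.mem_insert_self _ _)
    have hrest := ih (fun p hp' => h p (Finset.mem_insert_of_mem hp'))
    have hcop : Nat.Coprime a (∏ p ∈ S, p) := Nat.Coprime.prod_right fun p hp' =>
      (Nat.coprime_primes hp (h p (Finset.mem_insert_of_mem hp'))).mpr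
        (by rintro rfl; exact ha hp')
    exact (Nat.squarefree_mul hcop).mpr ⟨hp.prime.squarefree, hrest⟩

lemma prodCoef_sq (m : ℕ) (hm : Squarefree m)
    (h6 : ∀ q : ℕ, Nat.Prime q → q ∣ m → q % 6 = 1) :
    prodCoef (m ^ 2) = 2 ^ m.primeFactors.card := by
  have hex : ∃ S : Finset ℕ, (∀ p ∈ S, Nat.Prime p ∧ p % 6 = 1) ∧ (∏ p ∈ S, p ^ 2) = m ^ 2 := by
    refine ⟨m.primeFactors, fun p hp => ?_, ?_⟩
    · exact ⟨Nat.prime_of_mem_primeFactors hp,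
        h6 p (Nat.prime_of_mem_primeFactors hp) (Nat.dvd_of_mem_primeFactors hp)⟩
    · rw [Finset.prod_pow, Nat.prod_primeFactors_of_squarefree hm]
  rw [prodCoef, dif_pos hex]
  obtain ⟨h1, h2⟩ := hex.choose_spec
  have hprod : (∏ p ∈ hex.choose, p) = m := by
    have hsq : (∏ p ∈ hex.choose, p) ^ 2 = m ^ 2 := by
      rw [← Finset.prod_pow]; exact h2
    exact Nat.pow_left_injective (by norm_num) hsq
  have hch : hex.choose = m.primeFactors := by
    have := Nat.primeFactors_prod (fun p hp => (h1 p hp).1)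
    rw [hprod] at this
    exact this.symm
  rw [hch]

lemma prodCoef_zero (n : ℕ)
    (h : ¬ ∃ S : Finset ℕ, (∀ p ∈ S, Nat.Prime p ∧ p % 6 = 1) ∧ (∏ p ∈ S, p ^ 2) = n) :
    prodCoef n = 0 := by
  rw [prodCoef, dif_neg h]

lemma three_not_dvd (m : ℕ) (h6 : ∀ q : ℕ, Nat.Prime q → q ∣ m → q % 6 = 1) : ¬ (3 ∣ m) :=
  fun h => by simpa using h6 3 (by norm_num) h

lemma not_dvd_81 (m : ℕ) (h6 : ∀ q : ℕ, Nat.Prime q → q ∣ m → q % 6 = 1) :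
    ¬ (81 ∣ m ^ 2) := by
  intro h
  have h3 : (3 : ℕ) ∣ m ^ 2 := dvd_trans (by norm_num) h
  exact three_not_dvd m h6 (Nat.Prime.dvd_of_dvd_pow (by norm_num) h3)

lemma prodCoef_81 (m : ℕ) : prodCoef (81 * m ^ 2) = 0 := by
  apply prodCoef_zero
  rintro ⟨S, hS, hprod⟩
  have h3 : (3 : ℕ) ∣ ∏ p ∈ S, p ^ 2 := by
    rw [hprod]; exact Dvd.dvd.mul_right (by norm_num) _
  obtain ⟨p, hp, hdvd⟩ := (Nat.Prime.prime (by norm_num : Nat.Prime 3)).exists_mem_finset_dvd h3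
  have hp' := (hS p hp).1
  have hp3 : p = 3 := ((Nat.prime_dvd_prime_iff_eq (by norm_num) hp').mp
    ((Nat.Prime.dvd_of_dvd_pow (by norm_num) hdvd))).symm
  have := (hS p hp).2
  omega

lemma mem_of_prime_dvd_prod {S : Finset ℕ} (hS : ∀ p ∈ S, Nat.Prime p) {q : ℕ}
    (hq : Nat.Prime q) (hd : q ∣ ∏ p ∈ S, p) : q ∈ S := by
  obtain ⟨p, hp, hdvd⟩ := hq.prime.exists_mem_finset_dvd hd
  rwa [(Nat.prime_dvd_prime_iff_eq hq (hS p hp)).mp hdvd]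

/-- The `n`-th coefficient of `D(s) = -1 + (1 + 2·81^{-s}) ∏_{p ≡ 1 (6)} (1 + 2 p^{-2s})`
equals `2^{ω(m)+δ}` when `n = 81^δ · m²` with `δ ∈ {0,1}`, `m` a squarefree product of
primes `≡ 1 (mod 6)` and `(δ, m) ≠ (0, 1)`; it equals `0` at `n = 1` and at every other
`n ≥ 2`. -/
theorem seriesCoef_formula :
    (∀ δ m : ℕ, δ ≤ 1 → Squarefree m → (∀ q : ℕ, Nat.Prime q → q ∣ m → q % 6 = 1) →
      ¬(δ = 0 ∧ m = 1) →
      seriesCoef (81 ^ δ * m ^ 2) = 2 ^ (m.primeFactors.card + δ)) ∧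
    seriesCoef 1 = 0 ∧
    (∀ n : ℕ, 2 ≤ n →
      (¬ ∃ δ m : ℕ, δ ≤ 1 ∧ Squarefree m ∧ (∀ q : ℕ, Nat.Prime q → q ∣ m → q % 6 = 1) ∧
        n = 81 ^ δ * m ^ 2) →
      seriesCoef n = 0) := by
  refine ⟨?_, ?_, ?_⟩
  · intro δ m hδ hm h6 hne
    have hm0 : m ≠ 0 := hm.ne_zero
    interval_cases δ
    · have hm1 : m ≠ 1 := fun h => hne ⟨rfl, h⟩
      have hn1 : m ^ 2 ≠ 1 := by
        simpa [pow_eq_one_iff] using hm1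
      simp only [seriesCoef, pow_zero, one_mul, if_neg hn1, if_neg (not_dvd_81 m h6),
        prodCoef_sq m hm h6]
      ring
    · rw [pow_one]
      have hn1 : 81 * m ^ 2 ≠ 1 := by
        intro h
        have := Nat.eq_one_of_mul_eq_one_right h
        omega
      have hdvd : (81 : ℕ) ∣ 81 * m ^ 2 := dvd_mul_right _ _
      rw [seriesCoef, if_neg hn1, if_pos hdvd, Nat.mul_div_cancel_left _ (by norm_num),
        prodCoef_81 m, prodCoef_sq m hm h6]
      ring
  · have h1 : prodCoef 1 = 2 ^ ((1 : ℕ).primeFactors.card) := by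
      simpa using prodCoef_sq 1 squarefree_one
        (fun q hq hd => absurd (Nat.dvd_one.mp hd ▸ hq) (by norm_num))
    simp [seriesCoef, h1]
  · intro n hn hno
    have hn1 : n ≠ 1 := by omega
    have hp : prodCoef n = 0 := by
      apply prodCoef_zero
      rintro ⟨S, hS, hprod⟩
      apply hno
      refine ⟨0, ∏ p ∈ S, p, by norm_num, ?_, ?_, ?_⟩
      · exact squarefree_prod_primes (fun p hp => (hS p hp).1)
      · intro q hq hd
        exact (hS q (mem_of_prime_dvd_prod (fun p hp => (hS p hp).1) hq hd)).2
      · rw [pow_zero, one_mul, ← Finset.prod_pow, hprod]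
    rw [seriesCoef, if_neg hn1, hp]
    by_cases h81 : 81 ∣ n
    · rw [if_pos h81]
      have hz : prodCoef (n / 81) = 0 := by
        apply prodCoef_zero
        rintro ⟨S, hS, hprod⟩
        apply hno
        refine ⟨1, ∏ p ∈ S, p, le_refl _, ?_, ?_, ?_⟩
        · exact squarefree_prod_primes (fun p hp => (hS p hp).1)
        · intro q hq hd
          exact (hS q (mem_of_prime_dvd_prod (fun p hp => (hS p hp).1) hq hd)).2
        · rw [pow_one, ← Finset.prod_pow, hprod, Nat.mul_div_cancel' h81]
      simp [hz]
    · simp [h81]
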